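/- Let 0 < μ ≤ 12 and let u be a classical 1-periodic solution of the moderate-amplitude surface wave equation on [0,T) with initial data u₀ = u(·,0). Set C₀ = ∫₀¹ (u₀(x)² + (μ/12)·u₀'(x)²) dx. Then u(x,t)² ≤ (13/μ)·C₀ for all x ∈ ℝ and t ∈ [0,T); in particular sup_{t∈[0,T), x∈[0,1]} |u(x,t)| < ∞. -/

import Mathlib

structure ClassicalSol (ε μ T : ℝ) where
  u : ℝ → ℝ → ℝ
  ux : ℝ → ℝ → ℝ
  uxx : ℝ → ℝ → ℝ
  uxxx : ℝ → ℝ → ℝ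
  ut : ℝ → ℝ → ℝ
  utx : ℝ → ℝ → ℝ
  utxx : ℝ → ℝ → ℝ
  periodic : ∀ t ∈ Set.Ico (0:ℝ) T, Function.Periodic (fun x => u x t) 1
  hux : ∀ (x : ℝ), ∀ t ∈ Set.Ico (0:ℝ) T, HasDerivAt (fun x' => u x' t) (ux x t) x
  huxx : ∀ (x : ℝ), ∀ t ∈ Set.Ico (0:ℝ) T, HasDerivAt (fun x' => ux x' t) (uxx x t) x
  huxxx : ∀ (x : ℝ), ∀ t ∈ Set.Ico (0:ℝ) T, HasDerivAt (fun x' => uxx x' t) (uxxx x t) x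
  hut : ∀ (x : ℝ), ∀ t ∈ Set.Ico (0:ℝ) T,
    HasDerivWithinAt (fun t' => u x t') (ut x t) (Set.Ico (0:ℝ) T) t
  hutx : ∀ (x : ℝ), ∀ t ∈ Set.Ico (0:ℝ) T, HasDerivAt (fun x' => ut x' t) (utx x t) x
  hutxx : ∀ (x : ℝ), ∀ t ∈ Set.Ico (0:ℝ) T, HasDerivAt (fun x' => utx x' t) (utxx x t) x
  contu : ContinuousOn (fun p : ℝ × ℝ => u p.1 p.2) (Set.univ ×ˢ Set.Ico (0:ℝ) T)
  contux : ContinuousOn (fun p : ℝ × ℝ => ux p.1 p.2) (Set.univ ×ˢ Set.Ico (0:ℝ) T)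
  contuxx : ContinuousOn (fun p : ℝ × ℝ => uxx p.1 p.2) (Set.univ ×ˢ Set.Ico (0:ℝ) T)
  contuxxx : ContinuousOn (fun p : ℝ × ℝ => uxxx p.1 p.2) (Set.univ ×ˢ Set.Ico (0:ℝ) T)
  contut : ContinuousOn (fun p : ℝ × ℝ => ut p.1 p.2) (Set.univ ×ˢ Set.Ico (0:ℝ) T)
  contutx : ContinuousOn (fun p : ℝ × ℝ => utx p.1 p.2) (Set.univ ×ˢ Set.Ico (0:ℝ) T)
  contutxx : ContinuousOn (fun p : ℝ × ℝ => utxx p.1 p.2) (Set.univ ×ˢ Set.Ico (0:ℝ) T)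
  eqn : ∀ (x : ℝ), ∀ t ∈ Set.Ico (0:ℝ) T,
    ut x t + ux x t + (3/2) * ε * u x t * ux x t - (3/8) * ε^2 * (u x t)^2 * ux x t
      + (3/16) * ε^3 * (u x t)^3 * ux x t + (μ/12) * (uxxx x t - utxx x t)
      + (7 * ε * μ / 24) * (u x t * uxxx x t + 2 * ux x t * uxx x t) = 0

/-!
Multiplying the equation by `2u` turns it into a local conservation law `∂ₜ e + ∂ₓ F = 0` for
the energy density `e = u² + (μ/12) u_x²` and a flux `F` that is periodic in `x`, so `∫₀¹ e` is
conserved. It then suffices to bound `f(x)²` by `∫₀¹ (f² + r² f'²)`, `r² = μ/12`, for a single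
1-periodic profile `f`. The weight `φ(y) = tanh((y - x - 1/2)/r)` solves `r φ' = 1 - φ²`, so
`f² + r² f'² - (r f² φ)' = (r f' - f φ)² ≥ 0`; integrating over `[x, x + 1]` gives
`2 r tanh(1/(2r)) f(x)² ≤ ∫₀¹ (f² + r² f'²)`, and `2 r tanh(1/(2r)) ≥ μ/13` when `μ ≤ 12`.
-/

open MeasureTheory Set Function

namespace Real

theorem hasDerivAt_tanh (x : ℝ) : HasDerivAt tanh (1 - tanh x ^ 2) x := by
  rw [show tanh = fun y => sinh y / cosh y from funext tanh_eq_sinh_div_cosh]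
  refine ((hasDerivAt_sinh x).div (hasDerivAt_cosh x) (cosh_pos x).ne').congr_deriv ?_
  have := (cosh_pos x).ne'
  field_simp

theorem tanh_monotone : Monotone tanh := fun a b hab => by
  rw [tanh_eq_sinh_div_cosh, tanh_eq_sinh_div_cosh, div_le_div_iff₀ (cosh_pos a) (cosh_pos b)]
  have := sinh_nonneg_iff.mpr (sub_nonneg.mpr hab)
  rw [sinh_sub] at this
  linarith

theorem tanh_one_half_eq : tanh (1 / 2) = (exp 1 - 1) / (exp 1 + 1) := by
  have hsq : exp 1 = exp (1 / 2) * exp (1 / 2) := by rw [← exp_add]; norm_num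
  rw [tanh_eq_sinh_div_cosh, sinh_eq, cosh_eq, exp_neg, hsq]
  field_simp

theorem six_div_thirteen_le_tanh_one_half : 6 / 13 ≤ tanh (1 / 2) := by
  rw [tanh_one_half_eq, le_div_iff₀ (by positivity)]
  linarith [exp_one_gt_d9]

end Real

open Real

theorem Function.Periodic.hasDerivAt_periodic {f f' : ℝ → ℝ} {c : ℝ} (hf : Periodic f c)
    (hd : ∀ x, HasDerivAt f (f' x) x) : Periodic f' c := fun x => by
  have h := (hd (x + c)).comp_add_const x c
  rw [show (fun y => f (y + c)) = f from funext hf] at h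
  exact h.unique (hd x)

theorem Function.Periodic.two_mul_tanh_mul_sq_le_integral {f f' : ℝ → ℝ} {L r : ℝ}
    (hf : Periodic f L) (hL : 0 ≤ L) (hd : ∀ y, HasDerivAt f (f' y) y) (hc : Continuous f')
    (hr : 0 < r) (x : ℝ) :
    2 * r * tanh (L / (2 * r)) * f x ^ 2 ≤ ∫ y in 0..L, (f y ^ 2 + r ^ 2 * f' y ^ 2) := by
  set φ : ℝ → ℝ := fun y => tanh ((y - (x + L / 2)) / r)
  have hφ : ∀ y, HasDerivAt φ ((1 - φ y ^ 2) / r) y := fun y => by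
    refine ((hasDerivAt_tanh _).comp y
      (((hasDerivAt_id y).sub_const (x + L / 2)).div_const r)).congr_deriv ?_
    simp only [φ, id]
    ring
  have hfc : Continuous f := continuous_iff_continuousAt.2 fun y => (hd y).continuousAt
  have hφc : Continuous φ := continuous_iff_continuousAt.2 fun y => (hφ y).continuousAt
  set g : ℝ → ℝ := fun y => 2 * r * f y * f' y * φ y + f y ^ 2 * (1 - φ y ^ 2)
  have hg : ∀ y, HasDerivAt (fun z => r * (f z ^ 2 * φ z)) (g y) y := fun y => by
    refine ((((hd y).pow 2).mul (hφ y)).const_mul r).congr_deriv ?_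
    simp only [g, Pi.pow_apply]
    field_simp
    ring
  have hper : Periodic (fun y => f y ^ 2 + r ^ 2 * f' y ^ 2) L := fun y => by
    simp only [hf y, hf.hasDerivAt_periodic hd y]
  have hφL : φ (x + L) = tanh (L / (2 * r)) := by
    simp only [φ]; congr 1; field_simp; ring
  have hφ0 : φ x = - tanh (L / (2 * r)) := by
    simp only [φ]; rw [← tanh_neg]; congr 1; field_simp; ring
  calc 2 * r * tanh (L / (2 * r)) * f x ^ 2
      = r * (f (x + L) ^ 2 * φ (x + L)) - r * (f x ^ 2 * φ x) := by
        rw [hf x, hφL, hφ0]; ring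
    _ = ∫ y in x..x + L, g y :=
        (intervalIntegral.integral_eq_sub_of_hasDerivAt (fun y _ => hg y)
          ((by fun_prop : Continuous g).intervalIntegrable _ _)).symm
    _ ≤ ∫ y in x..x + L, (f y ^ 2 + r ^ 2 * f' y ^ 2) :=
        intervalIntegral.integral_mono_on (by linarith)
          ((by fun_prop : Continuous g).intervalIntegrable _ _)
          ((by fun_prop : Continuous _).intervalIntegrable _ _)
          fun y _ => by nlinarith [sq_nonneg (r * f' y - f y * φ y)]
    _ = ∫ y in 0..L, (f y ^ 2 + r ^ 2 * f' y ^ 2) := by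
        simpa using hper.intervalIntegral_add_eq x 0

theorem Function.Periodic.sq_le_thirteen_div_mul_integral {f f' : ℝ → ℝ} (hf : Periodic f 1)
    (hd : ∀ y, HasDerivAt f (f' y) y) (hc : Continuous f') {μ : ℝ} (hμ : 0 < μ) (hμ' : μ ≤ 12)
    (x : ℝ) : f x ^ 2 ≤ 13 / μ * ∫ y in 0..1, (f y ^ 2 + μ / 12 * f' y ^ 2) := by
  set r := √(μ / 12)
  have hr : 0 < r := sqrt_pos.2 (by positivity)
  have hr2 : r ^ 2 = μ / 12 := sq_sqrt (by positivity)
  have hr1 : r ≤ 1 := by nlinarith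
  have htanh : 6 / 13 ≤ tanh (1 / (2 * r)) :=
    six_div_thirteen_le_tanh_one_half.trans
      (tanh_monotone (by rw [le_div_iff₀ (by positivity)]; linarith))
  -- at `μ = 12` this reads `12 / 13 ≤ 2 tanh (1 / 2) ≈ 0.924`: the source of the constant `13`
  have hweight : μ / 13 ≤ 2 * r * tanh (1 / (2 * r)) := by nlinarith
  have h := hf.two_mul_tanh_mul_sq_le_integral zero_le_one hd hc hr x
  rw [hr2] at h
  rw [div_mul_eq_mul_div, le_div_iff₀ hμ]
  nlinarith [mul_le_mul_of_nonneg_right hweight (sq_nonneg (f x))]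

theorem hasDerivAt_intervalIntegral_of_continuousOn {F F' : ℝ → ℝ → ℝ} {a b : ℝ} (hab : a ≤ b)
    (hF : ∀ x, ContinuousOn (F x) (Icc a b))
    (hF' : ContinuousOn (uncurry F') (univ ×ˢ Icc a b))
    (hd : ∀ x, ∀ s ∈ Icc a b, HasDerivAt (F · s) (F' x s) x) (x₀ : ℝ) :
    HasDerivAt (fun x => ∫ s in a..b, F x s) (∫ s in a..b, F' x₀ s) x₀ := by
  obtain ⟨C, hC⟩ := ((isCompact_closedBall x₀ 1).prod isCompact_Icc).exists_bound_of_continuousOn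
    (hF'.mono (prod_mono (subset_univ _) subset_rfl))
  have hIoc : uIoc a b ⊆ Icc a b := by rw [uIoc_of_le hab]; exact Ioc_subset_Icc_self
  refine (intervalIntegral.hasDerivAt_integral_of_dominated_loc_of_deriv_le (bound := fun _ => C)
    (Metric.ball_mem_nhds x₀ one_pos)
    (.of_forall fun x => ((hF x).mono hIoc).aestronglyMeasurable measurableSet_uIoc)
    ((hF x₀).intervalIntegrable_of_Icc hab)
    (((hF'.uncurry_left x₀ (mem_univ _)).mono hIoc).aestronglyMeasurable measurableSet_uIoc)
    (.of_forall fun s hs x hx => hC (x, s) ⟨Metric.ball_subset_closedBall hx, hIoc hs⟩)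
    intervalIntegrable_const
    (.of_forall fun s hs x _ => hd x s (hIoc hs))).2

theorem eq_add_integral_of_hasDerivAt_of_mem_Ico {f f' : ℝ → ℝ} {a b t : ℝ}
    (hf : ContinuousOn f (Ico a b)) (hd : ∀ s ∈ Ioo a b, HasDerivAt f (f' s) s)
    (hf' : ContinuousOn f' (Ico a b)) (ht : t ∈ Ico a b) :
    f t = f a + ∫ s in a..t, f' s := by
  have hsub : Icc a t ⊆ Ico a b := Icc_subset_Ico_right ht.2
  rw [intervalIntegral.integral_eq_sub_of_hasDerivAt_of_le ht.1 (hf.mono hsub)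
    (fun s hs => hd s ⟨hs.1, hs.2.trans ht.2⟩) ((hf'.mono hsub).intervalIntegrable_of_Icc ht.1)]
  ring

namespace ClassicalSol

variable {ε μ T t : ℝ} (sol : ClassicalSol ε μ T)

theorem continuous_ux (ht : t ∈ Ico 0 T) : Continuous (sol.ux · t) :=
  continuous_iff_continuousAt.2 fun x => (sol.huxx x t ht).continuousAt

theorem periodic_ux (ht : t ∈ Ico 0 T) : Periodic (sol.ux · t) 1 :=
  (sol.periodic t ht).hasDerivAt_periodic fun x => sol.hux x t ht

theorem periodic_uxx (ht : t ∈ Ico 0 T) : Periodic (sol.uxx · t) 1 :=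
  (sol.periodic_ux ht).hasDerivAt_periodic fun x => sol.huxx x t ht

theorem periodic_ut (ht : t ∈ Ico 0 T) : Periodic (sol.ut · t) 1 := fun x => by
  have h := (sol.hut (x + 1) t ht).congr (fun s hs => (sol.periodic s hs x).symm)
    (sol.periodic t ht x).symm
  exact (uniqueDiffOn_Ico 0 T t ht).eq_deriv _ h (sol.hut x t ht)

theorem periodic_utx (ht : t ∈ Ico 0 T) : Periodic (sol.utx · t) 1 :=
  (sol.periodic_ut ht).hasDerivAt_periodic fun x => sol.hutx x t ht

noncomputable def energyDensity (x t : ℝ) : ℝ := sol.u x t ^ 2 + μ / 12 * sol.ux x t ^ 2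

/-- `∂ₜ` of the energy density, with `utx` standing for `∂ₜ ux` (justified by
`hasDerivAt_ux_time`). -/
noncomputable def energyDensityRate (x t : ℝ) : ℝ :=
  2 * sol.u x t * sol.ut x t + μ / 6 * sol.ux x t * sol.utx x t

noncomputable def energyFlux (x t : ℝ) : ℝ :=
  sol.u x t ^ 2 + ε * sol.u x t ^ 3 - 3 / 16 * ε ^ 2 * sol.u x t ^ 4
    + 3 / 40 * ε ^ 3 * sol.u x t ^ 5
    + μ / 6 * sol.u x t * sol.uxx x t - μ / 12 * sol.ux x t ^ 2 - μ / 6 * sol.u x t * sol.utx x t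
    + 7 * ε * μ / 12 * sol.u x t ^ 2 * sol.uxx x t

theorem continuousOn_energyDensity :
    ContinuousOn (uncurry sol.energyDensity) (univ ×ˢ Ico 0 T) :=
  (sol.contu.pow 2).add (continuousOn_const.mul (sol.contux.pow 2))

theorem continuousOn_energyDensityRate :
    ContinuousOn (uncurry sol.energyDensityRate) (univ ×ˢ Ico 0 T) :=
  ((continuousOn_const.mul sol.contu).mul sol.contut).add
    ((continuousOn_const.mul sol.contux).mul sol.contutx)

/-- The local conservation law `∂ₜ e + ∂ₓ F = 0`: it is `2u` times the equation. -/
theorem hasDerivAt_energyFlux (x : ℝ) (ht : t ∈ Ico 0 T) :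
    HasDerivAt (sol.energyFlux · t) (-sol.energyDensityRate x t) x := by
  have hu := sol.hux x t ht
  have hux := sol.huxx x t ht
  have huxx := sol.huxxx x t ht
  have hutx := sol.hutxx x t ht
  refine ((((((((hu.pow 2).add ((hu.pow 3).const_mul ε)).sub
    ((hu.pow 4).const_mul (3 / 16 * ε ^ 2))).add ((hu.pow 5).const_mul (3 / 40 * ε ^ 3))).add
    ((hu.const_mul (μ / 6)).mul huxx)).sub ((hux.pow 2).const_mul (μ / 12))).sub
    ((hu.const_mul (μ / 6)).mul hutx)).add
    (((hu.pow 2).const_mul (7 * ε * μ / 12)).mul huxx)).congr_deriv ?_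
  simp only [energyDensityRate, Nat.cast_ofNat, Pi.pow_apply]
  linear_combination (2 * sol.u x t) * sol.eqn x t ht

theorem periodic_energyFlux (ht : t ∈ Ico 0 T) : Periodic (sol.energyFlux · t) 1 := fun x => by
  simp only [energyFlux, sol.periodic t ht x, sol.periodic_ux ht x, sol.periodic_uxx ht x,
    sol.periodic_utx ht x]

theorem integral_energyDensityRate_eq_zero (ht : t ∈ Ico 0 T) :
    ∫ x in 0..1, sol.energyDensityRate x t = 0 := by
  have hc := continuousOn_univ.1 (sol.continuousOn_energyDensityRate.uncurry_right t ht)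
  have h := intervalIntegral.integral_eq_sub_of_hasDerivAt
    (fun x _ => sol.hasDerivAt_energyFlux x ht) (hc.neg.intervalIntegrable 0 1)
  rw [intervalIntegral.integral_neg, show sol.energyFlux 1 t = sol.energyFlux 0 t by
    simpa using sol.periodic_energyFlux ht 0] at h
  linarith

theorem u_eq_add_integral_ut (x : ℝ) (ht : t ∈ Ico 0 T) :
    sol.u x t = sol.u x 0 + ∫ s in 0..t, sol.ut x s :=
  eq_add_integral_of_hasDerivAt_of_mem_Ico (sol.contu.uncurry_left x (mem_univ x))
    (fun s hs => (sol.hut x s (Ioo_subset_Ico_self hs)).hasDerivAt (Ico_mem_nhds hs.1 hs.2))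
    (sol.contut.uncurry_left x (mem_univ x)) ht

/-- Equality of mixed partials `∂ₜ∂ₓu = ∂ₓ∂ₜu`, in integrated form: differentiate
`u x t = u x 0 + ∫₀ᵗ uₜ x s` under the integral sign. -/
theorem ux_eq_add_integral_utx (x : ℝ) (ht : t ∈ Ico 0 T) :
    sol.ux x t = sol.ux x 0 + ∫ s in 0..t, sol.utx x s := by
  have hsub : Icc 0 t ⊆ Ico 0 T := Icc_subset_Ico_right ht.2
  have hint := hasDerivAt_intervalIntegral_of_continuousOn ht.1
    (fun y => (sol.contut.uncurry_left y (mem_univ y)).mono hsub)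
    (sol.contutx.mono (prod_mono subset_rfl hsub)) (fun y s hs => sol.hutx y s (hsub hs)) x
  have h : HasDerivAt (sol.u · t) (sol.ux x 0 + ∫ s in 0..t, sol.utx x s) x := by
    rw [show (sol.u · t) = fun y => sol.u y 0 + ∫ s in 0..t, sol.ut y s from
      funext fun y => sol.u_eq_add_integral_ut y ht]
    exact (sol.hux x 0 ⟨le_rfl, ht.1.trans_lt ht.2⟩).add hint
  exact (sol.hux x t ht).unique h

theorem hasDerivAt_ux_time (x : ℝ) (ht : t ∈ Ioo 0 T) :
    HasDerivAt (sol.ux x) (sol.utx x t) t := by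
  have hc : ContinuousOn (sol.utx x) (Ico 0 T) := sol.contutx.uncurry_left x (mem_univ x)
  have hFTC := (intervalIntegral.integral_hasDerivAt_right
    ((hc.mono (Icc_subset_Ico_right ht.2)).intervalIntegrable_of_Icc ht.1.le)
    ((hc.mono Ioo_subset_Ico_self).stronglyMeasurableAtFilter isOpen_Ioo t ht)
    (hc.continuousAt (Ico_mem_nhds ht.1 ht.2))).const_add (sol.ux x 0)
  refine hFTC.congr_of_eventuallyEq ?_
  filter_upwards [Ico_mem_nhds ht.1 ht.2] with s hs using sol.ux_eq_add_integral_utx x hs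

theorem hasDerivAt_energyDensity_time (x : ℝ) (ht : t ∈ Ioo 0 T) :
    HasDerivAt (sol.energyDensity x) (sol.energyDensityRate x t) t := by
  have hu := (sol.hut x t (Ioo_subset_Ico_self ht)).hasDerivAt (Ico_mem_nhds ht.1 ht.2)
  have hux := sol.hasDerivAt_ux_time x ht
  refine ((hu.pow 2).add ((hux.pow 2).const_mul (μ / 12))).congr_deriv ?_
  simp only [energyDensityRate, Nat.cast_ofNat]
  ring

theorem energyDensity_eq_add_integral (x : ℝ) (ht : t ∈ Ico 0 T) :
    sol.energyDensity x t = sol.energyDensity x 0 + ∫ s in 0..t, sol.energyDensityRate x s :=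
  eq_add_integral_of_hasDerivAt_of_mem_Ico
    (sol.continuousOn_energyDensity.uncurry_left x (mem_univ x))
    (fun _ hs => sol.hasDerivAt_energyDensity_time x hs)
    (sol.continuousOn_energyDensityRate.uncurry_left x (mem_univ x)) ht

theorem integral_energyDensity_eq (ht : t ∈ Ico 0 T) :
    ∫ x in 0..1, sol.energyDensity x t = ∫ x in 0..1, sol.energyDensity x 0 := by
  have hsub : Icc (0 : ℝ) 1 ×ˢ Icc 0 t ⊆ univ ×ˢ Ico 0 T :=
    prod_mono (subset_univ _) (Icc_subset_Ico_right ht.2)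
  have hcont : ∀ s ∈ Ico 0 T, IntervalIntegrable (sol.energyDensity · s) volume 0 1 :=
    fun s hs => ((sol.continuousOn_energyDensity.uncurry_right s hs).mono
      (subset_univ _)).intervalIntegrable
  have hswap : ∫ x in 0..1, ∫ s in 0..t, sol.energyDensityRate x s = 0 := by
    rw [intervalIntegral_intervalIntegral_swap]
    · rw [intervalIntegral.integral_congr (g := fun _ => 0) fun s hs => ?_,
        intervalIntegral.integral_zero]
      rw [uIcc_of_le ht.1] at hs
      exact sol.integral_energyDensityRate_eq_zero (Icc_subset_Ico_right ht.2 hs)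
    · rw [uIoc_of_le zero_le_one, uIoc_of_le ht.1]
      exact ((sol.continuousOn_energyDensityRate.mono hsub).integrableOn_compact
        (isCompact_Icc.prod isCompact_Icc)).mono_set
        (prod_mono Ioc_subset_Icc_self Ioc_subset_Icc_self)
  have hdiff : ∫ x in 0..1, (sol.energyDensity x t - sol.energyDensity x 0) =
      ∫ x in 0..1, ∫ s in 0..t, sol.energyDensityRate x s :=
    intervalIntegral.integral_congr fun x _ => by
      simp only [sol.energyDensity_eq_add_integral x ht, add_sub_cancel_left]
  rw [intervalIntegral.integral_sub (hcont t ht) (hcont 0 ⟨le_rfl, ht.1.trans_lt ht.2⟩), hswap]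
    at hdiff
  linarith

end ClassicalSol

theorem stmt8_general (ε μ T : ℝ) (hμ : 0 < μ) (hμ' : μ ≤ 12)
    (sol : ClassicalSol ε μ T) :
    (∀ (x : ℝ), ∀ t ∈ Set.Ico (0:ℝ) T,
      (sol.u x t)^2
        ≤ (13/μ) * ∫ y in (0:ℝ)..1, ((sol.u y 0)^2 + (μ/12) * (sol.ux y 0)^2)) ∧
    ∃ M : ℝ, ∀ t ∈ Set.Ico (0:ℝ) T, ∀ x ∈ Set.Icc (0:ℝ) 1, |sol.u x t| ≤ M := by
  have hbound : ∀ (x : ℝ), ∀ t ∈ Ico 0 T,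
      sol.u x t ^ 2 ≤ 13 / μ * ∫ y in 0..1, (sol.u y 0 ^ 2 + μ / 12 * sol.ux y 0 ^ 2) :=
    fun x t ht => ((sol.periodic t ht).sq_le_thirteen_div_mul_integral (fun y => sol.hux y t ht)
      (sol.continuous_ux ht) hμ hμ' x).trans_eq
        (congrArg (13 / μ * ·) (sol.integral_energyDensity_eq ht))
  refine ⟨hbound, √(13 / μ * ∫ y in 0..1, (sol.u y 0 ^ 2 + μ / 12 * sol.ux y 0 ^ 2)),
    fun t ht x _ => ?_⟩
  rw [← sqrt_sq_eq_abs]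
  exact sqrt_le_sqrt (hbound x t ht)

/-- A priori bound on the amplitude: for `0 < μ ≤ 12`, a classical 1-periodic solution with
initial energy `C₀ = ∫₀¹ (u₀² + (μ/12)u₀'²)` satisfies `u(x,t)² ≤ (13/μ)·C₀` for all `x` and
`t ∈ [0,T)`; in particular the solution stays uniformly bounded. -/
theorem stmt8 (ε μ T : ℝ) (hε : 0 < ε) (hμ : 0 < μ) (hμ' : μ ≤ 12) (hT : 0 < T)
    (sol : ClassicalSol ε μ T) :
    (∀ (x : ℝ), ∀ t ∈ Set.Ico (0:ℝ) T,
      (sol.u x t)^2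
        ≤ (13/μ) * ∫ y in (0:ℝ)..1, ((sol.u y 0)^2 + (μ/12) * (sol.ux y 0)^2)) ∧
    ∃ M : ℝ, ∀ t ∈ Set.Ico (0:ℝ) T, ∀ x ∈ Set.Icc (0:ℝ) 1, |sol.u x t| ≤ M :=
  stmt8_general ε μ T hμ hμ' sol
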